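/- For every finite simple graph G = ([n], E), STAB(G) = TH_{α(G)}(I_G), where α(G) is the stability number of G (the maximum cardinality of a stable set of G). -/

import Mathlib

open MvPolynomial

/-- A polynomial `h` is `k`-sos mod a set `I` of polynomials if
`h - ∑ gᵢ² ∈ I` for some polynomials `gᵢ` of degree at most `k`. -/
def IsKSos {σ : Type*} (I : Set (MvPolynomial σ ℝ)) (k : ℕ) (h : MvPolynomial σ ℝ) : Prop :=
  ∃ (r : ℕ) (g : Fin r → MvPolynomial σ ℝ),
    (∀ i, (g i).totalDegree ≤ k) ∧ h - ∑ i, g i ^ 2 ∈ I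

/-- The `k`-th theta body of `I`: the points where every linear polynomial that is
`k`-sos mod `I` is nonnegative. -/
def thetaBody {σ : Type*} (I : Set (MvPolynomial σ ℝ)) (k : ℕ) : Set (σ → ℝ) :=
  {p | ∀ l : MvPolynomial σ ℝ, l.totalDegree ≤ 1 → IsKSos I k l → 0 ≤ eval p l}

/-- The real variety of a set of polynomials. -/
def realVariety {σ : Type*} (I : Set (MvPolynomial σ ℝ)) : Set (σ → ℝ) :=
  {x | ∀ f ∈ I, eval x f = 0}

/-- The real radical of a set of polynomials:
all `f` with `f^(2m) + ∑ gᵢ² ∈ I` for some `m` and some `gᵢ`. -/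
def realRadical {σ : Type*} (I : Set (MvPolynomial σ ℝ)) : Set (MvPolynomial σ ℝ) :=
  {f | ∃ (m r : ℕ) (g : Fin r → MvPolynomial σ ℝ), f ^ (2 * m) + ∑ i, g i ^ 2 ∈ I}

/-- The stable set ideal `I_G = ⟨xᵢ² - xᵢ (i ∈ [n]), xᵢxⱼ ({i,j} ∈ E)⟩` of a graph `G`. -/
noncomputable def stableIdeal {n : ℕ} (G : SimpleGraph (Fin n)) : Ideal (MvPolynomial (Fin n) ℝ) :=
  Ideal.span ((Set.range fun i : Fin n => X i ^ 2 - X i) ∪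
    {p | ∃ i j : Fin n, G.Adj i j ∧ p = X i * X j})

/-- `S_G`: the set of characteristic vectors of stable sets of `G`. -/
def stableSetVectors {n : ℕ} (G : SimpleGraph (Fin n)) : Set (Fin n → ℝ) :=
  {x | ∃ U : Finset (Fin n), (∀ i ∈ U, ∀ j ∈ U, ¬G.Adj i j) ∧
    x = fun i => if i ∈ U then (1 : ℝ) else 0}

/-- The stable set polytope `STAB(G) = conv(S_G)`. -/
def stabPolytope {n : ℕ} (G : SimpleGraph (Fin n)) : Set (Fin n → ℝ) :=
  convexHull ℝ (stableSetVectors G)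

/-!
Linear polynomials that are sums of squares modulo `I` are nonnegative on the real variety of `I`,
which gives `STAB(G) ⊆ TH_k(I_G)` for every `k`. Conversely, a point outside `STAB(G)` is cut off
by a linear polynomial `l ≥ 0` on `S_G`. Möbius inversion over the stable sets yields polynomials
`e_U` of degree `≤ α(G)` with `e_U(χ_V) = δ_UV`; since `I_G` is the vanishing ideal of `S_G`,
`l ≡ ∑_U (√(l(χ_U)) e_U)²` modulo `I_G`, so `l` is `α(G)`-sos.
-/

open MvPolynomial IncidenceAlgebra

section ThetaBody

variable {σ : Type*}

theorem eval_add_smul_of_totalDegree_le_one {l : MvPolynomial σ ℝ} (hl : l.totalDegree ≤ 1)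
    (x y : σ → ℝ) {a b : ℝ} (hab : a + b = 1) :
    eval (a • x + b • y) l = a * eval x l + b * eval y l := by
  simp only [eval_eq, Finset.mul_sum, ← Finset.sum_add_distrib]
  refine Finset.sum_congr rfl fun m hm => ?_
  rcases Nat.le_one_iff_eq_zero_or_eq_one.mp ((le_totalDegree hm).trans hl) with h | h
  · obtain rfl := (Finsupp.degree_eq_zero_iff m).mp h
    simp only [Finsupp.support_zero, Finset.prod_empty]
    linear_combination (coeff 0 l) * hab.symm
  · obtain ⟨i, rfl⟩ : m ∈ Set.range fun i => Finsupp.single i 1 := Finsupp.range_single_one ▸ h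
    simp only [Finsupp.support_single _ one_ne_zero, Finset.prod_singleton,
      Finsupp.single_eq_same, pow_one, Pi.add_apply, Pi.smul_apply, smul_eq_mul]
    ring

theorem convex_setOf_eval_nonneg {l : MvPolynomial σ ℝ} (hl : l.totalDegree ≤ 1) :
    Convex ℝ {x : σ → ℝ | 0 ≤ eval x l} := by
  intro x hx y hy a b ha hb hab
  rw [Set.mem_ofPred_eq, eval_add_smul_of_totalDegree_le_one hl x y hab]
  exact add_nonneg (mul_nonneg ha hx) (mul_nonneg hb hy)

theorem IsKSos.eval_nonneg {I : Set (MvPolynomial σ ℝ)} {k : ℕ} {f : MvPolynomial σ ℝ}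
    (hf : IsKSos I k f) {x : σ → ℝ} (hx : x ∈ realVariety I) : 0 ≤ eval x f := by
  obtain ⟨r, g, -, hg⟩ := hf
  have hfg := hx _ hg
  rw [map_sub, sub_eq_zero] at hfg
  rw [hfg, map_sum]
  exact Finset.sum_nonneg fun i _ => by rw [map_pow]; positivity

theorem isKSos_of_sub_sum_sq_mem {ι : Type*} {I : Set (MvPolynomial σ ℝ)} {k : ℕ}
    {f : MvPolynomial σ ℝ} (s : Finset ι) (g : ι → MvPolynomial σ ℝ)
    (hg : ∀ i ∈ s, (g i).totalDegree ≤ k) (hf : f - ∑ i ∈ s, g i ^ 2 ∈ I) : IsKSos I k f :=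
  ⟨s.card, fun j => g (s.equivFin.symm j), fun j => hg _ (s.equivFin.symm j).2, by
    rwa [Equiv.sum_comp s.equivFin.symm (fun i : s => g i ^ 2), Finset.sum_coe_sort s (g · ^ 2)]⟩

theorem convexHull_realVariety_subset_thetaBody (I : Set (MvPolynomial σ ℝ)) (k : ℕ) :
    convexHull ℝ (realVariety I) ⊆ thetaBody I k :=
  fun _ hp _ hl hsos =>
    convexHull_min (fun _ hx => hsos.eval_nonneg hx) (convex_setOf_eval_nonneg hl) hp

theorem exists_totalDegree_le_one_eval_eq [Fintype σ] [DecidableEq σ]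
    (f : (σ → ℝ) →ₗ[ℝ] ℝ) (c : ℝ) :
    ∃ l : MvPolynomial σ ℝ, l.totalDegree ≤ 1 ∧ ∀ x, eval x l = c + f x := by
  refine ⟨C c + ∑ i, f (fun j => if i = j then 1 else 0) • X i, ?_, fun x => ?_⟩
  · refine (totalDegree_add _ _).trans (max_le (by simp) ?_)
    refine (totalDegree_finsetSum _ _).trans (Finset.sup_le fun i _ => ?_)
    exact (totalDegree_smul_le _ _).trans (totalDegree_X i).le
  · simp [smul_eval, f.pi_apply_eq_sum_univ x, mul_comm]

theorem thetaBody_subset_convexHull [Fintype σ] {I : Set (MvPolynomial σ ℝ)} {k : ℕ}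
    {S : Set (σ → ℝ)} (hS : S.Finite)
    (hsos : ∀ l : MvPolynomial σ ℝ, l.totalDegree ≤ 1 → (∀ x ∈ S, 0 ≤ eval x l) → IsKSos I k l) :
    thetaBody I k ⊆ convexHull ℝ S := by
  classical
  intro p hp
  by_contra hpS
  obtain ⟨f, u, hfS, hfp⟩ := geometric_hahn_banach_closed_point (convex_convexHull ℝ S)
    (hS.isClosed_convexHull ℝ) hpS
  obtain ⟨l, hl, hleval⟩ := exists_totalDegree_le_one_eval_eq (-f.toLinearMap) u
  have hlS : ∀ x ∈ S, 0 ≤ eval x l := fun x hx => by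
    simpa [hleval] using (hfS x (subset_convexHull ℝ S hx)).le
  have hlp := hp l hl (hsos l hl hlS)
  simp only [hleval, LinearMap.neg_apply, ContinuousLinearMap.coe_coe] at hlp
  linarith

end ThetaBody

section SquarefreeMonomial

variable {σ : Type*}

noncomputable def sqfreeMonomial (W : Finset σ) : MvPolynomial σ ℝ := ∏ i ∈ W, X i

theorem totalDegree_sqfreeMonomial_le (W : Finset σ) : (sqfreeMonomial W).totalDegree ≤ W.card :=
  (totalDegree_finsetProd _ _).trans (by simp [totalDegree_X])

variable [DecidableEq σ]

def charVec (U : Finset σ) : σ → ℝ := fun i => if i ∈ U then 1 else 0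

theorem eval_charVec_sqfreeMonomial (U W : Finset σ) :
    eval (charVec U) (sqfreeMonomial W) = if W ⊆ U then 1 else 0 := by
  simp only [sqfreeMonomial, map_prod, eval_X, charVec, Finset.prod_boole, Finset.subset_iff]

end SquarefreeMonomial

section StableSets

variable {n : ℕ} {G : SimpleGraph (Fin n)}

open scoped Classical in
noncomputable def stableSets (G : SimpleGraph (Fin n)) : Finset (Finset (Fin n)) :=
  {U | ∀ i ∈ U, ∀ j ∈ U, ¬G.Adj i j}

theorem mem_stableSets {U : Finset (Fin n)} :
    U ∈ stableSets G ↔ ∀ i ∈ U, ∀ j ∈ U, ¬G.Adj i j := by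
  simp [stableSets]

theorem mem_stableSets_of_subset {U V : Finset (Fin n)} (hV : V ∈ stableSets G) (hUV : U ⊆ V) :
    U ∈ stableSets G :=
  mem_stableSets.mpr fun i hi j hj => mem_stableSets.mp hV i (hUV hi) j (hUV hj)

theorem stableSetVectors_eq_image : stableSetVectors G = charVec '' ↑(stableSets G) := by
  ext x
  simp only [stableSetVectors, Set.mem_image, Finset.mem_coe, mem_stableSets]
  exact exists_congr fun U => and_congr_right fun _ => eq_comm

theorem charVec_mem_realVariety {U : Finset (Fin n)} (hU : U ∈ stableSets G) :
    charVec U ∈ realVariety (stableIdeal G : Set (MvPolynomial (Fin n) ℝ)) := by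
  intro f hf
  refine (Ideal.span_le (I := RingHom.ker (eval (charVec U)))).mpr ?_ hf
  rintro _ (⟨i, rfl⟩ | ⟨i, j, hij, rfl⟩)
  · by_cases hi : i ∈ U <;> simp [charVec, hi]
  · by_cases hi : i ∈ U
    · have hj : j ∉ U := fun hj => mem_stableSets.mp hU i hi j hj hij
      simp [charVec, hi, hj]
    · simp [charVec, hi]

theorem sqfreeMonomial_mem_stableIdeal {W : Finset (Fin n)} (hW : W ∉ stableSets G) :
    sqfreeMonomial W ∈ stableIdeal G := by
  obtain ⟨i, hi, j, hj, hij⟩ : ∃ i ∈ W, ∃ j ∈ W, G.Adj i j := by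
    simpa [mem_stableSets] using hW
  refine Ideal.mem_of_dvd _ ?_ (Ideal.subset_span (Or.inr ⟨i, j, hij, rfl⟩))
  rw [← Finset.prod_pair hij.ne]
  exact Finset.prod_dvd_prod_of_subset _ _ _ (Finset.insert_subset hi (by simpa))

theorem sqfreeMonomial_mul_X_sub_mem_stableIdeal (W : Finset (Fin n)) (i : Fin n) :
    sqfreeMonomial W * X i - sqfreeMonomial (insert i W) ∈ stableIdeal G := by
  by_cases hi : i ∈ W
  · have hWi : sqfreeMonomial W * X i - sqfreeMonomial (insert i W) =
        sqfreeMonomial (W.erase i) * (X i ^ 2 - X i) := by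
      simp only [Finset.insert_eq_of_mem hi, sqfreeMonomial, ← Finset.mul_prod_erase _ _ hi]
      ring
    rw [hWi]
    exact Ideal.mul_mem_left _ _ (Ideal.subset_span (Or.inl ⟨i, rfl⟩))
  · rw [sqfreeMonomial, sqfreeMonomial, Finset.prod_insert hi, mul_comm, sub_self]
    exact zero_mem _

theorem mem_span_stableSets_union_stableIdeal (f : MvPolynomial (Fin n) ℝ) :
    f ∈ Submodule.span ℝ (sqfreeMonomial '' ↑(stableSets G) ∪ (stableIdeal G : Set (MvPolynomial (Fin n) ℝ))) := by
  set M := Submodule.span ℝ (sqfreeMonomial '' ↑(stableSets G) ∪ (stableIdeal G : Set (MvPolynomial (Fin n) ℝ)))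
  have hideal : ∀ q ∈ stableIdeal G, q ∈ M := fun q hq => Submodule.subset_span (Or.inr hq)
  have hmon : ∀ W, sqfreeMonomial W ∈ M := fun W => by
    by_cases hW : W ∈ stableSets G
    · exact Submodule.subset_span (Or.inl ⟨W, hW, rfl⟩)
    · exact hideal _ (sqfreeMonomial_mem_stableIdeal hW)
  have hmulX : ∀ p ∈ M, ∀ i, p * X i ∈ M := by
    intro p hp i
    induction hp using Submodule.span_induction with
    | mem p hp =>
      rcases hp with ⟨W, -, rfl⟩ | hp
      · rw [← sub_add_cancel (sqfreeMonomial W * X i) (sqfreeMonomial (insert i W))]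
        exact M.add_mem (hideal _ (sqfreeMonomial_mul_X_sub_mem_stableIdeal W i)) (hmon _)
      · exact hideal _ (Ideal.mul_mem_right _ _ hp)
    | zero => simp
    | add p q _ _ hp hq => rw [add_mul]; exact M.add_mem hp hq
    | smul r p _ hp => rw [smul_mul_assoc]; exact M.smul_mem r hp
  induction f using MvPolynomial.induction_on with
  | C r => simpa [sqfreeMonomial, C_eq_smul_one] using M.smul_mem r (hmon ∅)
  | add p q hp hq => exact M.add_mem hp hq
  | mul_X p i hp => exact hmulX p hp i

end StableSets

section Interpolation

variable {n : ℕ} {G : SimpleGraph (Fin n)}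

noncomputable def stableInterpolator (G : SimpleGraph (Fin n)) (U : Finset (Fin n)) :
    MvPolynomial (Fin n) ℝ :=
  ∑ W ∈ stableSets G, mu ℝ U W • sqfreeMonomial W

theorem totalDegree_stableInterpolator_le {k : ℕ} (hk : ∀ U ∈ stableSets G, U.card ≤ k)
    (U : Finset (Fin n)) : (stableInterpolator G U).totalDegree ≤ k :=
  (totalDegree_finsetSum _ _).trans <| Finset.sup_le fun W hW =>
    (totalDegree_smul_le _ _).trans ((totalDegree_sqfreeMonomial_le W).trans (hk W hW))

theorem eval_charVec_stableInterpolator (U : Finset (Fin n)) {V : Finset (Fin n)}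
    (hV : V ∈ stableSets G) :
    eval (charVec V) (stableInterpolator G U) = if U = V then 1 else 0 := by
  calc eval (charVec V) (stableInterpolator G U)
      = ∑ W ∈ stableSets G with W ⊆ V, mu ℝ U W := by
        simp [stableInterpolator, smul_eval, eval_charVec_sqfreeMonomial, Finset.sum_filter]
    _ = ∑ W ∈ Finset.Icc U V, mu ℝ U W := by
        refine (Finset.sum_subset (fun W hW => ?_) fun W hW hWUV => ?_).symm
        · obtain ⟨hUW, hWV⟩ := Finset.mem_Icc.mp hW
          exact Finset.mem_filter.mpr ⟨mem_stableSets_of_subset hV hWV, hWV⟩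
        · refine apply_eq_zero_of_not_le (fun hUW => hWUV ?_) _
          exact Finset.mem_Icc.mpr ⟨hUW, (Finset.mem_filter.mp hW).2⟩
    _ = if U = V then 1 else 0 := sum_Icc_mu_right U V

theorem sum_stableInterpolator {W : Finset (Fin n)} (hW : W ∈ stableSets G) :
    ∑ V ∈ stableSets G with W ⊆ V, stableInterpolator G V = sqfreeMonomial W := by
  calc ∑ V ∈ stableSets G with W ⊆ V, stableInterpolator G V
      = ∑ W' ∈ stableSets G, (∑ V ∈ stableSets G with W ⊆ V, mu ℝ V W') • sqfreeMonomial W' := by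
        simp only [stableInterpolator, Finset.sum_smul]
        exact Finset.sum_comm
    _ = ∑ W' ∈ stableSets G, (if W = W' then 1 else 0 : ℝ) • sqfreeMonomial W' := by
        refine Finset.sum_congr rfl fun W' hW' => ?_
        rw [← sum_Icc_mu_left W W']
        congr 1
        refine (Finset.sum_subset (fun V hV => ?_) fun V hV hVWW' => ?_).symm
        · obtain ⟨hWV, hVW'⟩ := Finset.mem_Icc.mp hV
          exact Finset.mem_filter.mpr ⟨mem_stableSets_of_subset hW' hVW', hWV⟩
        · refine apply_eq_zero_of_not_le (fun hVW' => hVWW' ?_) _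
          exact Finset.mem_Icc.mpr ⟨(Finset.mem_filter.mp hV).2, hVW'⟩
    _ = sqfreeMonomial W := by simp [hW]

theorem sub_sum_eval_smul_stableInterpolator_mem (f : MvPolynomial (Fin n) ℝ) :
    f - ∑ U ∈ stableSets G, eval (charVec U) f • stableInterpolator G U ∈ stableIdeal G := by
  induction mem_span_stableSets_union_stableIdeal (G := G) f using Submodule.span_induction with
  | mem p hp =>
    rcases hp with ⟨W, hW, rfl⟩ | hp
    · simp [eval_charVec_sqfreeMonomial, ← Finset.sum_filter, sum_stableInterpolator hW]
    · rw [Finset.sum_eq_zero fun U hU => by rw [charVec_mem_realVariety hU p hp, zero_smul]]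
      simpa using hp
  | zero => simp
  | add p q _ _ hp hq =>
    simpa [add_smul, Finset.sum_add_distrib, add_sub_add_comm] using add_mem hp hq
  | smul r p _ hp =>
    simpa [mul_smul, ← Finset.smul_sum, ← smul_sub] using Submodule.smul_of_tower_mem _ r hp

theorem mem_stableIdeal_of_forall_eval_eq_zero {f : MvPolynomial (Fin n) ℝ}
    (hf : ∀ U ∈ stableSets G, eval (charVec U) f = 0) : f ∈ stableIdeal G := by
  have hlagrange := sub_sum_eval_smul_stableInterpolator_mem (G := G) f
  rwa [Finset.sum_eq_zero fun U hU => by rw [hf U hU, zero_smul], sub_zero] at hlagrange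

theorem isKSos_stableIdeal_of_eval_nonneg {k : ℕ} (hk : ∀ U ∈ stableSets G, U.card ≤ k)
    {f : MvPolynomial (Fin n) ℝ} (hf : ∀ U ∈ stableSets G, 0 ≤ eval (charVec U) f) :
    IsKSos (stableIdeal G : Set (MvPolynomial (Fin n) ℝ)) k f := by
  refine isKSos_of_sub_sum_sq_mem (stableSets G)
    (fun U => √(eval (charVec U) f) • stableInterpolator G U)
    (fun U _ => (totalDegree_smul_le _ _).trans (totalDegree_stableInterpolator_le hk U))
    (mem_stableIdeal_of_forall_eval_eq_zero fun V hV => ?_)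
  rw [map_sub, map_sum, sub_eq_zero, Finset.sum_eq_single_of_mem V hV fun U _ hUV => by
    simp [smul_eval, eval_charVec_stableInterpolator U hV, hUV]]
  simp [smul_eval, eval_charVec_stableInterpolator V hV, Real.sq_sqrt (hf V hV)]

end Interpolation

/-- For every finite simple graph `G` with stability number `α(G)`,
`STAB(G) = TH_{α(G)}(I_G)`. -/
theorem stabPolytope_eq_thetaBody_stabilityNumber {n : ℕ} (G : SimpleGraph (Fin n)) (a : ℕ)
    (ha : IsGreatest {m : ℕ | ∃ U : Finset (Fin n),
      (∀ i ∈ U, ∀ j ∈ U, ¬G.Adj i j) ∧ U.card = m} a) :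
    stabPolytope G =
      thetaBody ((stableIdeal G : Ideal (MvPolynomial (Fin n) ℝ)) :
        Set (MvPolynomial (Fin n) ℝ)) a := by
  have hcard : ∀ U ∈ stableSets G, U.card ≤ a := fun U hU => ha.2 ⟨U, mem_stableSets.mp hU, rfl⟩
  rw [stabPolytope, stableSetVectors_eq_image]
  refine subset_antisymm ?_ ?_
  · refine (convexHull_mono ?_).trans (convexHull_realVariety_subset_thetaBody _ a)
    rintro _ ⟨U, hU, rfl⟩
    exact charVec_mem_realVariety hU
  · refine thetaBody_subset_convexHull ((stableSets G).finite_toSet.image _) fun l _ hl => ?_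
    exact isKSos_stableIdeal_of_eval_nonneg hcard fun U hU => hl _ ⟨U, hU, rfl⟩
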